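/- Let g ≥ 1. The quotient by simultaneous conjugation of the set 𝒰 = {(A₁, B₁, …, A_g, B_g, C₁, C₂, C₃) : each Aₖ, Bₖ is a unit quaternion, each Cᵢ is a purely imaginary unit quaternion, C₁C₂C₃ = ∏ₖ [Aₖ, Bₖ], and Re(∏ₖ [Aₖ, Bₖ]) > 1/2} is in bijection with the (unquotiented) set U = {(A₁, B₁, …, A_g, B_g) ∈ Sp(1)^{2g} : Re(∏ₖ [Aₖ, Bₖ]) > 1/2}. (Here Re(P) > 1/2 corresponds to the trace condition Tr > 1 on the corresponding SU(2) matrix; this is the key identification of neighborhoods used to prove that χ(SI(Y)) = ±|H₁(Y;ℤ)| for rational homology spheres.) -/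

import Mathlib

open Quaternion

noncomputable def qi : ℍ[ℝ] := ⟨0, 1, 0, 0⟩
noncomputable def qj : ℍ[ℝ] := ⟨0, 0, 1, 0⟩
noncomputable def qk : ℍ[ℝ] := ⟨0, 0, 0, 1⟩

lemma norm_qi : ‖qi‖ = 1 := by
  have h : ‖qi‖ * ‖qi‖ = 1 := by
    rw [← Quaternion.normSq_eq_norm_mul_self, Quaternion.normSq_def']; simp [qi]
  nlinarith [norm_nonneg qi]

lemma norm_qj : ‖qj‖ = 1 := by
  have h : ‖qj‖ * ‖qj‖ = 1 := by
    rw [← Quaternion.normSq_eq_norm_mul_self, Quaternion.normSq_def']; simp [qj]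
  nlinarith [norm_nonneg qj]

lemma norm_qk : ‖qk‖ = 1 := by
  have h : ‖qk‖ * ‖qk‖ = 1 := by
    rw [← Quaternion.normSq_eq_norm_mul_self, Quaternion.normSq_def']; simp [qk]
  nlinarith [norm_nonneg qk]

lemma re_qi : qi.re = 0 := rfl
lemma re_qj : qj.re = 0 := rfl
lemma re_qk : qk.re = 0 := rfl

lemma qi_mul_qj_mul_neg_qk : qi * qj * (-qk) = 1 := by
  ext <;> simp only [Quaternion.re_mul, Quaternion.imI_mul, Quaternion.imJ_mul, Quaternion.imK_mul,
    Quaternion.re_neg, Quaternion.imI_neg, Quaternion.imJ_neg, Quaternion.imK_neg] <;> simp [qi, qj, qk]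

/-- Simultaneous conjugation by unit quaternions, as a relation on tuples of quaternions. -/
def uConj {ι : Type} (x y : ι → ℍ[ℝ]) : Prop :=
  ∃ D : ℍ[ℝ], ‖D‖ = 1 ∧ ∀ k, y k = D * x k * D⁻¹

theorem uConj_equivalence (ι : Type) : Equivalence (@uConj ι) := by
  constructor
  · intro x
    exact ⟨1, norm_one, fun k => by simp⟩
  · rintro x y ⟨D, hD, h⟩
    have hD0 : D ≠ 0 := by
      intro h0; rw [h0, norm_zero] at hD; norm_num at hD
    refine ⟨D⁻¹, by rw [norm_inv, hD]; norm_num, fun k => ?_⟩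
    rw [h k, inv_inv]
    simp [mul_assoc, inv_mul_cancel₀ hD0, inv_mul_cancel_left₀ hD0]
  · rintro x y z ⟨D, hD, h⟩ ⟨E, hE, h'⟩
    refine ⟨E * D, by rw [norm_mul, hD, hE]; norm_num, fun k => ?_⟩
    rw [h' k, h k, mul_inv_rev]
    simp [mul_assoc]

/-- The setoid of simultaneous conjugation on tuples of quaternions. -/
def conjSetoid (ι : Type) : Setoid (ι → ℍ[ℝ]) := ⟨uConj, uConj_equivalence ι⟩

/-- The setoid of simultaneous conjugation restricted to a conjugation-invariant subset. -/
def conjSetoidOn {ι : Type} (S : Set (ι → ℍ[ℝ])) : Setoid S :=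
  (conjSetoid ι).comap Subtype.val

/-- The (ordered) product of commutators `∏ₖ [Aₖ, Bₖ]`. -/
noncomputable def commProd {g : ℕ} (A B : Fin g → ℍ[ℝ]) : ℍ[ℝ] :=
  (List.ofFn fun k => A k * B k * (A k)⁻¹ * (B k)⁻¹).prod

/-- The open set `𝒰` of tuples `(A₁, B₁, …, A_g, B_g, C₁, C₂, C₃)` of unit quaternions with
each `Cᵢ` purely imaginary, `C₁C₂C₃ = ∏ₖ [Aₖ, Bₖ]` and `Re(∏ₖ [Aₖ, Bₖ]) > 1/2`. -/
def U9 (g : ℕ) : Set ((Fin g ⊕ Fin g) ⊕ Fin 3 → ℍ[ℝ]) :=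
  {x | (∀ k : Fin g, ‖x (Sum.inl (Sum.inl k))‖ = 1) ∧
    (∀ k : Fin g, ‖x (Sum.inl (Sum.inr k))‖ = 1) ∧
    (∀ j : Fin 3, ‖x (Sum.inr j)‖ = 1 ∧ (x (Sum.inr j)).re = 0) ∧
    x (Sum.inr 0) * x (Sum.inr 1) * x (Sum.inr 2) =
      commProd (fun k => x (Sum.inl (Sum.inl k))) (fun k => x (Sum.inl (Sum.inr k))) ∧
    (commProd (fun k => x (Sum.inl (Sum.inl k))) (fun k => x (Sum.inl (Sum.inr k)))).re
      > 1 / 2}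

/-- The open set `U` of pairs of `g`-tuples of unit quaternions with
`Re(∏ₖ [Aₖ, Bₖ]) > 1/2`. -/
def U9' (g : ℕ) : Type :=
  {AB : (Fin g → ℍ[ℝ]) × (Fin g → ℍ[ℝ]) //
    (∀ k, ‖AB.1 k‖ = 1) ∧ (∀ k, ‖AB.2 k‖ = 1) ∧ (commProd AB.1 AB.2).re > 1 / 2}

/-! Conjugating by a unit quaternion, first move `C₁` to `i` and then, rotating about `i`, move
`C₂` into the half-plane `{a i + b j | b > 0}`; this is possible because `C₂ ≠ ±C₁`, which
follows from `Re(C₁C₂C₃) ≠ 0`. Once `C₁ = i`, the conditions that `C₃ = (i C₂)⁻¹ P` be purely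
imaginary and `b > 0` pin down `C₂` and `C₃` in terms of `P = ∏ₖ [Aₖ, Bₖ]`. A quaternion fixing
both `i` and such a `C₂` under conjugation is real, hence acts trivially, so the conjugated
`(A, B)` is a complete invariant of the orbit, and every `(A, B) ∈ U` is attained by the
normal form `(A, B, i, C₂(P), C₃(P))`. -/

lemma SemiconjBy.prod_ofFn {M : Type*} [Monoid M] {a : M} :
    ∀ {n : ℕ} {f f' : Fin n → M}, (∀ k, SemiconjBy a (f k) (f' k)) →
      SemiconjBy a (List.ofFn f).prod (List.ofFn f').prod
  | 0, _, _, _ => by simp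
  | n + 1, f, f', h => by
    simp only [List.ofFn_succ, List.prod_cons]
    exact (h 0).mul_right (SemiconjBy.prod_ofFn fun k => h k.succ)

lemma semiconjBy_one_sub_mul {R : Type*} [Ring R] {x y : R} (hx : x * x = -1) (hy : y * y = -1) :
    SemiconjBy (1 - y * x) x y := by
  simp only [SemiconjBy, sub_mul, mul_sub, mul_assoc, hx, ← mul_assoc y y, hy]
  noncomm_ring

namespace Quaternion

lemma re_mul_comm (a b : ℍ[ℝ]) : (a * b).re = (b * a).re := by
  simp only [re_mul]; ring

lemma normSq_eq_one_iff {x : ℍ[ℝ]} : normSq x = 1 ↔ ‖x‖ = 1 := by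
  rw [normSq_eq_norm_mul_self, ← sq, pow_eq_one_iff_of_nonneg (norm_nonneg x) two_ne_zero]

lemma mul_self_eq_neg_one {x : ℍ[ℝ]} (hn : ‖x‖ = 1) (hr : x.re = 0) : x * x = -1 := by
  rw [← pow_two, sq_eq_neg_normSq.2 hr, normSq_eq_one_iff.2 hn, coe_one]

lemma star_mul_self_of_norm_eq_one {x : ℍ[ℝ]} (hn : ‖x‖ = 1) : star x * x = 1 := by
  rw [star_mul_self, normSq_eq_one_iff.2 hn, coe_one]

lemma mul_star_self_of_norm_eq_one {x : ℍ[ℝ]} (hn : ‖x‖ = 1) : x * star x = 1 := by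
  rw [self_mul_star, normSq_eq_one_iff.2 hn, coe_one]

lemma semiconjBy_conj {D : ℍ[ℝ]} (hD : D ≠ 0) (x : ℍ[ℝ]) : SemiconjBy D x (D * x * D⁻¹) :=
  (inv_mul_cancel_right₀ hD _).symm

lemma _root_.SemiconjBy.re_eq {D x y : ℍ[ℝ]} (hD : D ≠ 0) (h : SemiconjBy D x y) :
    x.re = y.re := by
  rw [(eq_mul_inv_iff_mul_eq₀ hD).2 h.eq.symm, re_mul_comm, ← mul_assoc, inv_mul_cancel₀ hD,
    one_mul]

lemma _root_.SemiconjBy.norm_eq {D x y : ℍ[ℝ]} (hD : D ≠ 0) (h : SemiconjBy D x y) :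
    ‖x‖ = ‖y‖ := by
  have := congrArg norm h.eq
  rw [norm_mul, norm_mul, mul_comm] at this
  exact mul_right_cancel₀ (norm_ne_zero_iff.2 hD) this

end Quaternion

@[simp] lemma imI_qi : qi.imI = 1 := rfl
@[simp] lemma imJ_qi : qi.imJ = 0 := rfl
@[simp] lemma imK_qi : qi.imK = 0 := rfl
@[simp] lemma imI_qj : qj.imI = 0 := rfl
@[simp] lemma imJ_qj : qj.imJ = 1 := rfl
@[simp] lemma imK_qj : qj.imK = 0 := rfl

attribute [simp] re_qi re_qj

lemma qi_mul_qi : qi * qi = -1 := mul_self_eq_neg_one norm_qi re_qi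

lemma uConj_iff {ι : Type} {x y : ι → ℍ[ℝ]} :
    uConj x y ↔ ∃ D ≠ 0, ∀ k, SemiconjBy D (x k) (y k) := by
  constructor
  · rintro ⟨D, hD, h⟩
    have hD0 : D ≠ 0 := norm_ne_zero_iff.1 (hD ▸ one_ne_zero)
    exact ⟨D, hD0, fun k => h k ▸ semiconjBy_conj hD0 _⟩
  · rintro ⟨D, hD, h⟩
    have hD' : (‖D‖⁻¹ : ℝ) • D ≠ 0 := smul_ne_zero (inv_ne_zero (norm_ne_zero_iff.2 hD)) hD
    exact ⟨_, norm_smul_inv_norm hD, fun k =>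
      (eq_mul_inv_iff_mul_eq₀ hD').2 ((h k).smul_left _).eq.symm⟩

section CommProd

variable {g : ℕ} {A B : Fin g → ℍ[ℝ]}

lemma semiconjBy_commProd {D : ℍ[ℝ]} {A' B' : Fin g → ℍ[ℝ]}
    (hA : ∀ k, SemiconjBy D (A k) (A' k)) (hB : ∀ k, SemiconjBy D (B k) (B' k)) :
    SemiconjBy D (commProd A B) (commProd A' B') :=
  SemiconjBy.prod_ofFn fun k =>
    (((hA k).mul_right (hB k)).mul_right (hA k).inv_right₀).mul_right (hB k).inv_right₀

lemma norm_commProd (hA : ∀ k, ‖A k‖ = 1) (hB : ∀ k, ‖B k‖ = 1) : ‖commProd A B‖ = 1 := by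
  rw [commProd, List.norm_prod, List.map_ofFn, List.prod_ofFn]
  exact Finset.prod_eq_one fun k _ => by simp [hA k, hB k]

end CommProd

section NormalForm

variable {P : ℍ[ℝ]}

noncomputable def normalC₂ (P : ℍ[ℝ]) : ℍ[ℝ] :=
  ⟨0, P.imK / √(P.re ^ 2 + P.imK ^ 2), P.re / √(P.re ^ 2 + P.imK ^ 2), 0⟩

noncomputable def normalC₃ (P : ℍ[ℝ]) : ℍ[ℝ] := star (qi * normalC₂ P) * P

lemma re_star_qi_mul_mul {c : ℍ[ℝ]} (hre : c.re = 0) (hK : c.imK = 0) (P : ℍ[ℝ]) :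
    (star (qi * c) * P).re = c.imJ * P.imK - c.imI * P.re := by
  simp only [re_mul, re_star, imI_star, imJ_star, imK_star, imI_mul, imJ_mul, imK_mul, re_qi,
    imI_qi, imJ_qi, imK_qi, hre, hK]
  ring

lemma imJ_normalC₂_pos (hP : 0 < P.re) : 0 < (normalC₂ P).imJ :=
  div_pos hP (Real.sqrt_pos.2 (by positivity))

lemma norm_normalC₂ (hP : 0 < P.re) : ‖normalC₂ P‖ = 1 := by
  have ht : 0 < P.re ^ 2 + P.imK ^ 2 := by positivity
  rw [← normSq_eq_one_iff, normSq_def', normalC₂]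
  simp only [div_pow, Real.sq_sqrt ht.le]
  field_simp
  ring

lemma qi_mul_normalC₂_mul_normalC₃ (hP : 0 < P.re) : qi * normalC₂ P * normalC₃ P = P := by
  have h : ‖qi * normalC₂ P‖ = 1 := by rw [norm_mul, norm_qi, norm_normalC₂ hP, one_mul]
  rw [normalC₃, ← mul_assoc, mul_star_self_of_norm_eq_one h, one_mul]

lemma re_normalC₃ (hP : 0 < P.re) : (normalC₃ P).re = 0 := by
  have ht : 0 < √(P.re ^ 2 + P.imK ^ 2) := by positivity
  rw [normalC₃, re_star_qi_mul_mul rfl rfl, normalC₂]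
  dsimp only
  field_simp
  ring

lemma norm_normalC₃ (hP : 0 < P.re) (hPn : ‖P‖ = 1) : ‖normalC₃ P‖ = 1 := by
  rw [normalC₃, norm_mul, norm_star, norm_mul, norm_qi, norm_normalC₂ hP, hPn, one_mul, one_mul]

/-- `qi * c₂ * c₃ = P` determines `c₃` from `c₂`, and `c₃` is purely imaginary exactly when
`c₂ = a i + b j` is proportional to `P.imK i + P.re j`. -/
lemma eq_normalC₂_and_eq_normalC₃ (hP : 0 < P.re) {c₂ c₃ : ℍ[ℝ]} (hn : ‖c₂‖ = 1)
    (hre : c₂.re = 0) (hK : c₂.imK = 0) (hJ : 0 < c₂.imJ) (hc₃ : c₃.re = 0)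
    (h : qi * c₂ * c₃ = P) : c₂ = normalC₂ P ∧ c₃ = normalC₃ P := by
  have hqc₂ : ‖qi * c₂‖ = 1 := by rw [norm_mul, norm_qi, hn, one_mul]
  have hc₃_eq : c₃ = star (qi * c₂) * P := by
    rw [← h, ← mul_assoc, star_mul_self_of_norm_eq_one hqc₂, one_mul]
  have horth : c₂.imJ * P.imK = c₂.imI * P.re := by
    rw [← sub_eq_zero, ← re_star_qi_mul_mul hre hK, ← hc₃_eq, hc₃]
  have hunit : c₂.imI ^ 2 + c₂.imJ ^ 2 = 1 := by
    have := normSq_eq_one_iff.2 hn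
    rw [normSq_def', hre, hK] at this
    linear_combination this
  set t := √(P.re ^ 2 + P.imK ^ 2)
  have ht : 0 < t := by positivity
  have ht_sq : t ^ 2 = P.re ^ 2 + P.imK ^ 2 := Real.sq_sqrt (by positivity)
  have hJt : c₂.imJ * t = P.re := by
    refine (pow_left_inj₀ (by positivity) hP.le two_ne_zero).1 ?_
    linear_combination c₂.imJ ^ 2 * ht_sq + (c₂.imI * P.re + c₂.imJ * P.imK) * horth
      + P.re ^ 2 * hunit
  have hIt : c₂.imI * t = P.imK := by
    refine mul_right_cancel₀ hP.ne' ?_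
    linear_combination P.imK * hJt - t * horth
  have hc₂ : c₂ = normalC₂ P := by
    ext
    · exact hre
    · exact (eq_div_iff ht.ne').2 hIt
    · exact (eq_div_iff ht.ne').2 hJt
    · exact hK
  exact ⟨hc₂, hc₃_eq.trans (by rw [hc₂, normalC₃])⟩

end NormalForm

section Normalization

lemma exists_semiconjBy_qi {x : ℍ[ℝ]} (hn : ‖x‖ = 1) (hr : x.re = 0) :
    ∃ D ≠ 0, SemiconjBy D x qi := by
  by_cases hx : x = -qi
  · refine ⟨qj, norm_ne_zero_iff.1 (by rw [norm_qj]; exact one_ne_zero), ?_⟩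
    unfold SemiconjBy
    ext <;> simp [hx, re_mul, imI_mul, imJ_mul, imK_mul]
  · refine ⟨1 - qi * x, fun h => hx ?_,
      semiconjBy_one_sub_mul (mul_self_eq_neg_one hn hr) qi_mul_qi⟩
    have := congrArg (qi * ·) (sub_eq_zero.1 h).symm
    simpa [← mul_assoc, qi_mul_qi, neg_eq_iff_eq_neg] using this

/-- `u + v i` rotates the `jk`-component `(c.imJ, c.imK)` of `c` onto `(r, 0)`. -/
lemma semiconjBy_coe_add_smul_qi {c : ℍ[ℝ]} {u v r : ℝ} (hre : c.re = 0)
    (h₁ : u * (c.imJ - r) = v * c.imK) (h₂ : u * c.imK = -(v * (c.imJ + r))) :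
    SemiconjBy ((u : ℍ[ℝ]) + v • qi) c (c.imI • qi + r • qj) := by
  unfold SemiconjBy
  ext <;> simp only [re_mul, imI_mul, imJ_mul, imK_mul, re_add, imI_add, imJ_add, imK_add, re_coe,
    imI_coe, imJ_coe, imK_coe, re_smul, imI_smul, imJ_smul, imK_smul, re_qi, imI_qi, imJ_qi, imK_qi,
    re_qj, imI_qj, imJ_qj, imK_qj, smul_eq_mul, hre]
  · ring
  · ring
  · linear_combination h₁
  · linear_combination h₂

lemma exists_commute_qi_semiconjBy {c : ℍ[ℝ]} (hn : ‖c‖ = 1) (hre : c.re = 0) (hc : c ≠ qi)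
    (hc' : c ≠ -qi) :
    ∃ D ≠ 0, Commute D qi ∧ ∃ c', SemiconjBy D c c' ∧ c'.imK = 0 ∧ 0 < c'.imJ := by
  have hjk : 0 < c.imJ ^ 2 + c.imK ^ 2 := by
    refine (add_nonneg (sq_nonneg _) (sq_nonneg _)).lt_of_ne fun h => ?_
    have hI : c.imI ^ 2 = 1 := by
      have := normSq_eq_one_iff.2 hn
      rw [normSq_def', hre] at this
      linear_combination this + h
    have hJ : c.imJ = 0 := by nlinarith
    have hK : c.imK = 0 := by nlinarith
    rcases sq_eq_one_iff.1 hI with hI | hI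
    · exact hc (by ext <;> simp [hre, hI, hJ, hK])
    · exact hc' (by ext <;> simp [hre, hI, hJ, hK])
  set r := √(c.imJ ^ 2 + c.imK ^ 2)
  have hr : 0 < r := Real.sqrt_pos.2 hjk
  have hr_sq : r ^ 2 = c.imJ ^ 2 + c.imK ^ 2 := Real.sq_sqrt hjk.le
  have hcomm (u v : ℝ) : Commute ((u : ℍ[ℝ]) + v • qi) qi :=
    Commute.add_left (coe_commutes u qi) ((Commute.refl qi).smul_left v)
  have hupper : (c.imI • qi + r • qj).imK = 0 ∧ 0 < (c.imI • qi + r • qj).imJ := by simpa using hr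
  by_cases hJr : c.imJ + r = 0
  · refine ⟨c.imK + (c.imJ - r) • qi, fun h => ?_, hcomm _ _, _,
      semiconjBy_coe_add_smul_qi hre (by ring) (by linear_combination -hr_sq), hupper⟩
    have := congrArg QuaternionAlgebra.imI h
    simp only [imI_add, imI_coe, imI_smul, imI_qi, imI_zero, smul_eq_mul] at this
    linarith
  · refine ⟨(c.imJ + r : ℝ) + (-c.imK) • qi, fun h => hJr ?_, hcomm _ _, _,
      semiconjBy_coe_add_smul_qi hre (by linear_combination -hr_sq) (by ring), hupper⟩
    simpa using congrArg QuaternionAlgebra.re h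

lemma exists_semiconjBy_qi_and_upper_half_plane {c₁ c₂ : ℍ[ℝ]} (h₁n : ‖c₁‖ = 1)
    (h₁r : c₁.re = 0) (h₂n : ‖c₂‖ = 1) (h₂r : c₂.re = 0) (hne : c₂ ≠ c₁) (hne' : c₂ ≠ -c₁) :
    ∃ D ≠ 0, SemiconjBy D c₁ qi ∧ ∃ c, SemiconjBy D c₂ c ∧ c.imK = 0 ∧ 0 < c.imJ := by
  obtain ⟨D₁, hD₁, h₁⟩ := exists_semiconjBy_qi h₁n h₁r
  have h₂ := semiconjBy_conj hD₁ c₂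
  have hne₁ : D₁ * c₂ * D₁⁻¹ ≠ qi := fun h =>
    hne (mul_left_cancel₀ hD₁ (by rw [h₂.eq, h, h₁.eq]))
  have hne₂ : D₁ * c₂ * D₁⁻¹ ≠ -qi := fun h =>
    hne' (mul_left_cancel₀ hD₁ (by rw [h₂.eq, h, mul_neg, neg_mul, h₁.eq]))
  obtain ⟨D₂, hD₂, hcomm, c, h₂', hK, hJ⟩ := exists_commute_qi_semiconjBy
    (h₂.norm_eq hD₁ ▸ h₂n) (h₂.re_eq hD₁ ▸ h₂r) hne₁ hne₂
  exact ⟨D₂ * D₁, mul_ne_zero hD₂ hD₁, SemiconjBy.mul_left hcomm h₁, c, h₂'.mul_left h₂, hK, hJ⟩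

lemma ne_and_ne_neg_of_re_mul_mul_ne_zero {c₁ c₂ c₃ : ℍ[ℝ]} (h₁n : ‖c₁‖ = 1) (h₁r : c₁.re = 0)
    (h₃r : c₃.re = 0) (h : (c₁ * c₂ * c₃).re ≠ 0) : c₂ ≠ c₁ ∧ c₂ ≠ -c₁ := by
  constructor <;> rintro rfl <;> simp [mul_self_eq_neg_one h₁n h₁r, h₃r] at h

end Normalization

section Quotient

variable {g : ℕ}

noncomputable def normalForm (A B : Fin g → ℍ[ℝ]) : (Fin g ⊕ Fin g) ⊕ Fin 3 → ℍ[ℝ] :=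
  Sum.elim (Sum.elim A B) ![qi, normalC₂ (commProd A B), normalC₃ (commProd A B)]

lemma normalForm_mem {A B : Fin g → ℍ[ℝ]} (hA : ∀ k, ‖A k‖ = 1) (hB : ∀ k, ‖B k‖ = 1)
    (hP : 1 / 2 < (commProd A B).re) : normalForm A B ∈ U9 g := by
  have hP₀ : 0 < (commProd A B).re := by linarith
  refine ⟨hA, hB, fun j => ?_, qi_mul_normalC₂_mul_normalC₃ hP₀, hP⟩
  fin_cases j
  · exact ⟨norm_qi, re_qi⟩
  · exact ⟨norm_normalC₂ hP₀, rfl⟩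
  · exact ⟨norm_normalC₃ hP₀ (norm_commProd hA hB), re_normalC₃ hP₀⟩

lemma coe_re_eq_of_commute_qi {D c c' : ℍ[ℝ]} (hi : Commute D qi) (h : SemiconjBy D c c')
    (hre : c.re = 0) (hre' : c'.re = 0) (hK : c.imK = 0) (hK' : c'.imK = 0) (hJ : 0 < c.imJ)
    (hJ' : 0 < c'.imJ) : (D.re : ℍ[ℝ]) = D := by
  have hDJ : D.imJ = 0 := by
    have := congrArg QuaternionAlgebra.imK hi.eq
    simp only [imK_mul, re_qi, imI_qi, imJ_qi, imK_qi] at this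
    linarith
  have hDK : D.imK = 0 := by
    have := congrArg QuaternionAlgebra.imJ hi.eq
    simp only [imJ_mul, re_qi, imI_qi, imJ_qi, imK_qi] at this
    linarith
  have hDI : D.imI = 0 := by
    have := congrArg QuaternionAlgebra.imK h.eq
    simp only [imK_mul, hre, hre', hK, hK', hDJ, hDK] at this
    nlinarith
  ext <;> simp [hDI, hDJ, hDK]

lemma eq_of_uConj_normalForm {A B A' B' : Fin g → ℍ[ℝ]} (hP : 0 < (commProd A B).re)
    (hP' : 0 < (commProd A' B').re) (h : uConj (normalForm A B) (normalForm A' B')) :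
    A = A' ∧ B = B' := by
  obtain ⟨D, hD, hs⟩ := uConj_iff.1 h
  have hDre : (D.re : ℍ[ℝ]) = D := coe_re_eq_of_commute_qi (hs (.inr 0)) (hs (.inr 1)) rfl rfl
    rfl rfl (imJ_normalC₂_pos hP) (imJ_normalC₂_pos hP')
  have hfix (k) : normalForm A B k = normalForm A' B' k :=
    mul_right_cancel₀ hD ((hDre ▸ coe_commutes D.re _ : Commute D _).eq.symm.trans (hs k).eq)
  exact ⟨funext fun k => hfix (.inl (.inl k)), funext fun k => hfix (.inl (.inr k))⟩

lemma exists_uConj_normalForm {x : (Fin g ⊕ Fin g) ⊕ Fin 3 → ℍ[ℝ]} (hx : x ∈ U9 g) :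
    ∃ y : U9' g, uConj x (normalForm y.1.1 y.1.2) := by
  obtain ⟨hA, hB, hC, hprod, hP⟩ := hx
  obtain ⟨hne, hne'⟩ := ne_and_ne_neg_of_re_mul_mul_ne_zero (hC 0).1 (hC 0).2 (hC 2).2
    (by rw [hprod]; linarith)
  obtain ⟨D, hD, h₁, c, h₂, hK, hJ⟩ :=
    exists_semiconjBy_qi_and_upper_half_plane (hC 0).1 (hC 0).2 (hC 1).1 (hC 1).2 hne hne'
  set A' : Fin g → ℍ[ℝ] := fun k => D * x (.inl (.inl k)) * D⁻¹
  set B' : Fin g → ℍ[ℝ] := fun k => D * x (.inl (.inr k)) * D⁻¹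
  have hA' (k) : SemiconjBy D (x (.inl (.inl k))) (A' k) := semiconjBy_conj hD _
  have hB' (k) : SemiconjBy D (x (.inl (.inr k))) (B' k) := semiconjBy_conj hD _
  have hP' := semiconjBy_commProd hA' hB'
  have h₃ := semiconjBy_conj hD (x (.inr 2))
  have hprod' : qi * c * (D * x (.inr 2) * D⁻¹) = commProd A' B' :=
    mul_right_cancel₀ hD ((hprod ▸ (h₁.mul_right h₂).mul_right h₃).eq.symm.trans hP'.eq)
  have hP'_re : 1 / 2 < (commProd A' B').re := hP'.re_eq hD ▸ hP
  obtain ⟨hc, hc₃⟩ := eq_normalC₂_and_eq_normalC₃ (by linarith) (h₂.norm_eq hD ▸ (hC 1).1)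
    (h₂.re_eq hD ▸ (hC 1).2) hK hJ (h₃.re_eq hD ▸ (hC 2).2) hprod'
  refine ⟨⟨(A', B'), fun k => (hA' k).norm_eq hD ▸ hA k, fun k => (hB' k).norm_eq hD ▸ hB k,
    hP'_re⟩, uConj_iff.2 ⟨D, hD, ?_⟩⟩
  rintro ((k | k) | j)
  · exact hA' k
  · exact hB' k
  · fin_cases j
    · exact h₁
    · change SemiconjBy D _ (normalC₂ (commProd A' B'))
      exact hc ▸ h₂
    · change SemiconjBy D _ (normalC₃ (commProd A' B'))
      exact hc₃ ▸ h₃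

noncomputable def normalClass (y : U9' g) : Quotient (conjSetoidOn (U9 g)) :=
  ⟦⟨normalForm y.1.1 y.1.2, normalForm_mem y.2.1 y.2.2.1 y.2.2.2⟩⟧

lemma normalClass_injective : Function.Injective (normalClass (g := g)) := by
  rintro ⟨⟨A, B⟩, _, _, hP⟩ ⟨⟨A', B'⟩, _, _, hP'⟩ h
  obtain ⟨rfl, rfl⟩ := eq_of_uConj_normalForm (by linarith) (by linarith) (Quotient.exact h)
  rfl

lemma normalClass_surjective : Function.Surjective (normalClass (g := g)) := by
  rintro ⟨x, hx⟩
  obtain ⟨y, hy⟩ := exists_uConj_normalForm hx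
  exact ⟨y, Quotient.sound ((conjSetoidOn (U9 g)).symm hy)⟩

end Quotient

theorem neighborhood_quotient_bijective_unquotiented_general (g : ℕ) :
    Nonempty (Quotient (conjSetoidOn (U9 g)) ≃ U9' g) :=
  ⟨(Equiv.ofBijective normalClass ⟨normalClass_injective, normalClass_surjective⟩).symm⟩

/-- For `g ≥ 1`, the quotient of `𝒰` by simultaneous conjugation is in bijection with the
unquotiented set `U ⊆ Sp(1)^{2g}`. -/
theorem neighborhood_quotient_bijective_unquotiented (g : ℕ) (hg : 1 ≤ g) :
    Nonempty (Quotient (conjSetoidOn (U9 g)) ≃ U9' g) :=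
  neighborhood_quotient_bijective_unquotiented_general g
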